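/- Assume the Bethe equations (B1_j) for j = 1,…,m₁ and (B0_j) for j = 1,…,m₀ hold, and let v(z) = u(z)² + u′(z). Fix j ∈ {1,…,m₀} and let v_{j,n} (n ≥ −1) be the coefficients of the Laurent expansion of v at w⁰_j, i.e., v(z) = 2/(z−w⁰_j)² + Σ_{n≥−1} v_{j,n}(z−w⁰_j)^n near w⁰_j. Then v_{j,−1} = k/w⁰_j, and the 'no-monodromy' cubic equation holds: (1/4)·(k/w⁰_j)³ − (k/w⁰_j)·v_{j,0} + v_{j,1} = 0. -/

import Mathlib

/-!
Near `a = w⁰ⱼ` write `u = h - 1/(z - a)` with `h` holomorphic at `a`, and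
`h(z) = h(a) + (z - a) d(z)` with `d = dslope h a`. Then
`u² + u′ = 2/(z - a)² - 2h(a)/(z - a) + (h² - d + (z - a) d′)`, so the residue is `-2h(a)` and the
regular part has value `h(a)² - h′(a)` and derivative `2h(a)h′(a)` at `a`.
The Bethe equation (B0ⱼ) says exactly `h(a) = -k/(2a)`, and the cubic becomes an identity in `h(a)`
and `h′(a)`.
-/

open Finset Topology

/-- `u(z) = -χ - ℓ/z + Σ_j 1/(z - w¹_j) - Σ_j 1/(z - w⁰_j)`. -/
noncomputable def uFun (χ ℓ : ℂ) {m₁ m₀ : ℕ} (w1 : Fin m₁ → ℂ) (w0 : Fin m₀ → ℂ)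
    (z : ℂ) : ℂ :=
  -χ - ℓ / z + ∑ j, 1 / (z - w1 j) - ∑ j, 1 / (z - w0 j)

/-- `u′(z) = ℓ/z² - Σ_j 1/(z - w¹_j)² + Σ_j 1/(z - w⁰_j)²`. -/
noncomputable def uFun' (ℓ : ℂ) {m₁ m₀ : ℕ} (w1 : Fin m₁ → ℂ) (w0 : Fin m₀ → ℂ)
    (z : ℂ) : ℂ :=
  ℓ / z ^ 2 - ∑ j, 1 / (z - w1 j) ^ 2 + ∑ j, 1 / (z - w0 j) ^ 2

open Filter

theorem hasDerivAt_const_div_sub {𝕜 : Type*} [NontriviallyNormedField 𝕜] (c : 𝕜) {b z : 𝕜}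
    (hz : z ≠ b) : HasDerivAt (fun x => c / (x - b)) (-(c / (z - b) ^ 2)) z := by
  have := (hasDerivAt_const z c).fun_div ((hasDerivAt_id' z).sub_const b) (sub_ne_zero.2 hz)
  exact this.congr_deriv (by ring)

theorem analyticAt_dslope {E : Type*} [NormedAddCommGroup E] [NormedSpace ℂ E] [CompleteSpace E]
    {f : ℂ → E} {a : ℂ} (hf : AnalyticAt ℂ f a) : AnalyticAt ℂ (dslope f a) a := by
  have hs : {z | DifferentiableAt ℂ f z} ∈ 𝓝 a :=
    Complex.analyticAt_iff_eventually_differentiableAt.1 hf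
  exact ((Complex.differentiableOn_dslope hs).2 fun z hz => hz.differentiableWithinAt).analyticAt hs

theorem eq_zero_and_eventuallyEq_of_eq_sub_mul {𝕜 : Type*} [NontriviallyNormedField 𝕜]
    {F G : 𝕜 → 𝕜} {a c : 𝕜} (hF : ContinuousAt F a) (hG : ContinuousAt G a)
    (h : ∀ᶠ z in 𝓝[≠] a, c = (z - a) * (F z - G z)) : c = 0 ∧ G =ᶠ[𝓝 a] F := by
  have hc : c = 0 := by
    have hcont : ContinuousAt (fun z => (z - a) * (F z - G z)) a :=
      (continuousAt_id.sub continuousAt_const).mul (hF.sub hG)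
    refine tendsto_nhds_unique (tendsto_const_nhds.congr' h) ?_
    simpa using hcont.tendsto.mono_left nhdsWithin_le_nhds
  refine ⟨hc, (hG.eventuallyEq_nhds_iff_eventuallyEq_nhdsNE hF).1 ?_⟩
  filter_upwards [h, self_mem_nhdsWithin] with z hz hza
  rw [hc, eq_comm, mul_eq_zero] at hz
  exact (sub_eq_zero.1 (hz.resolve_left (sub_ne_zero.2 hza))).symm

theorem laurent_coeffs_sq_add_deriv {h G : ℂ → ℂ} {a r : ℂ} (hh : AnalyticAt ℂ h a)
    (hG : ContinuousAt G a)
    (hexp : ∀ᶠ z in 𝓝[≠] a, (h z - 1 / (z - a)) ^ 2 + (deriv h z + 1 / (z - a) ^ 2)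
      = 2 / (z - a) ^ 2 + r / (z - a) + G z) :
    r = -2 * h a ∧ G a = h a ^ 2 - deriv h a ∧ HasDerivAt G (2 * h a * deriv h a) a := by
  set d := dslope h a
  have hd : AnalyticAt ℂ d a := analyticAt_dslope hh
  have hh_slope (z : ℂ) : h z = h a + (z - a) * d z := by
    rw [← smul_eq_mul, sub_smul_dslope]; ring
  have hderiv : ∀ᶠ z in 𝓝 a, HasDerivAt h (d z + (z - a) * deriv d z) z := by
    filter_upwards [hd.eventually_analyticAt] with z hz
    have := (((hasDerivAt_id z).sub_const a).fun_mul hz.differentiableAt.hasDerivAt).const_add (h a)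
    exact (this.congr_deriv (by simp)).congr_of_eventuallyEq (.of_forall hh_slope)
  set F : ℂ → ℂ := fun z => h z ^ 2 - d z + (z - a) * deriv d z
  have hF : HasDerivAt F (2 * h a * deriv h a) a := by
    have := ((hh.differentiableAt.hasDerivAt.fun_pow 2).fun_sub
      hd.differentiableAt.hasDerivAt).fun_add
        (((hasDerivAt_id' a).sub_const a).fun_mul hd.deriv.differentiableAt.hasDerivAt)
    exact this.congr_deriv (by ring)
  have hpole : ∀ᶠ z in 𝓝[≠] a, r + 2 * h a = (z - a) * (F z - G z) := by
    filter_upwards [hexp, eventually_nhdsWithin_of_eventually_nhds hderiv, self_mem_nhdsWithin]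
      with z hz hdz hza
    rw [hdz.deriv, hh_slope z] at hz
    simp only [F, hh_slope z]
    field_simp [sub_ne_zero.2 hza] at hz
    apply mul_left_cancel₀ (sub_ne_zero.2 hza)
    linear_combination -hz
  obtain ⟨hr, hGF⟩ := eq_zero_and_eventuallyEq_of_eq_sub_mul hF.continuousAt hG hpole
  refine ⟨by linear_combination hr, ?_, hF.congr_of_eventuallyEq hGF⟩
  simp [hGF.eq_of_nhds, F, d, dslope_same]

section
variable (χ ℓ : ℂ) {m₁ m₀ : ℕ} (w1 : Fin m₁ → ℂ) (w0 : Fin m₀ → ℂ)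

noncomputable def uFunOn (S : Finset (Fin m₀)) (z : ℂ) : ℂ :=
  -χ - ℓ / z + ∑ s, 1 / (z - w1 s) - ∑ s ∈ S, 1 / (z - w0 s)

theorem uFunOn_erase {S : Finset (Fin m₀)} {j : Fin m₀} (hj : j ∈ S) (z : ℂ) :
    uFunOn χ ℓ w1 w0 S z = uFunOn χ ℓ w1 w0 (S.erase j) z - 1 / (z - w0 j) := by
  simp only [uFunOn, ← Finset.sum_erase_add S _ hj]
  ring

theorem hasDerivAt_uFunOn (S : Finset (Fin m₀)) {z : ℂ} (hz : z ≠ 0) (hz1 : ∀ s, z ≠ w1 s)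
    (hz0 : ∀ s ∈ S, z ≠ w0 s) :
    HasDerivAt (uFunOn χ ℓ w1 w0 S)
      (ℓ / z ^ 2 - ∑ s, 1 / (z - w1 s) ^ 2 + ∑ s ∈ S, 1 / (z - w0 s) ^ 2) z := by
  have hℓ := hasDerivAt_const_div_sub ℓ (b := 0) hz
  simp only [sub_zero] at hℓ
  have h1 := HasDerivAt.fun_sum (u := univ) fun s _ => hasDerivAt_const_div_sub 1 (hz1 s)
  have h0 := HasDerivAt.fun_sum fun s hs => hasDerivAt_const_div_sub 1 (hz0 s hs)
  refine (((hℓ.const_sub (-χ)).fun_add h1).fun_sub h0).congr_deriv ?_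
  simp only [sum_neg_distrib]
  ring

theorem eventually_hasDerivAt_uFunOn_erase {j : Fin m₀} (hw0 : w0 j ≠ 0)
    (hw0inj : Function.Injective w0) (hdisj : ∀ i, w1 i ≠ w0 j) :
    ∀ᶠ z in 𝓝 (w0 j), HasDerivAt (uFunOn χ ℓ w1 w0 (univ.erase j))
      (uFun' ℓ w1 w0 z - 1 / (z - w0 j) ^ 2) z := by
  have hpoles : ∀ᶠ z in 𝓝 (w0 j), z ≠ 0 ∧ (∀ s, z ≠ w1 s) ∧ ∀ s ∈ univ.erase j, z ≠ w0 s := by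
    refine (eventually_ne_nhds hw0).and <| .and ?_ ?_
    · exact eventually_all.2 fun s => eventually_ne_nhds (hdisj s).symm
    · exact (eventually_all_finset _).2 fun s hs =>
        eventually_ne_nhds fun h => (mem_erase.1 hs).1 (hw0inj h.symm)
  filter_upwards [hpoles] with z ⟨hz, hz1, hz0⟩
  -- at `z = w⁰ⱼ` the formula still holds, both `1/(z - w⁰ⱼ)²` terms being `0` there
  refine (hasDerivAt_uFunOn χ ℓ w1 w0 _ hz hz1 hz0).congr_deriv ?_
  simp only [uFun', ← Finset.sum_erase_add univ _ (mem_univ j)]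
  ring

end

/-- The Laurent expansion of `u² + u′` at `w⁰ⱼ` is encoded by the residue `r = v_{j,-1}` and an
analytic `G` with `v_{j,0} = G(w⁰ⱼ)` and `v_{j,1} = G′(w⁰ⱼ)`. -/
theorem no_monodromy_cubic_of_bethe (χ ℓ k : ℂ) (m₁ m₀ : ℕ)
    (w1 : Fin m₁ → ℂ) (w0 : Fin m₀ → ℂ)
    (hw0 : ∀ j, w0 j ≠ 0)
    (hw0inj : Function.Injective w0)
    (hdisj : ∀ i j, w1 i ≠ w0 j)
    (hB0 : ∀ j, (k / 2 - ℓ) / w0 j + ∑ s, 1 / (w0 j - w1 s)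
      - ∑ s ∈ univ.erase j, 1 / (w0 j - w0 s) - χ = 0)
    (j : Fin m₀) (r : ℂ) (G : ℂ → ℂ) (hG : AnalyticAt ℂ G (w0 j))
    (hexp : ∀ᶠ z in 𝓝[≠] (w0 j),
      (uFun χ ℓ w1 w0 z) ^ 2 + uFun' ℓ w1 w0 z
        = 2 / (z - w0 j) ^ 2 + r / (z - w0 j) + G z) :
    r = k / w0 j ∧
      (1 / 4 : ℂ) * (k / w0 j) ^ 3 - (k / w0 j) * G (w0 j) + deriv G (w0 j) = 0 := by
  set a := w0 j
  set h := uFunOn χ ℓ w1 w0 (univ.erase j)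
  have hderiv := eventually_hasDerivAt_uFunOn_erase χ ℓ w1 w0 (hw0 j) hw0inj fun i => hdisj i j
  have hh : AnalyticAt ℂ h a := Complex.analyticAt_iff_eventually_differentiableAt.2 <|
    hderiv.mono fun z hz => hz.differentiableAt
  have hexp' : ∀ᶠ z in 𝓝[≠] a, (h z - 1 / (z - a)) ^ 2 + (deriv h z + 1 / (z - a) ^ 2)
      = 2 / (z - a) ^ 2 + r / (z - a) + G z := by
    filter_upwards [hexp, eventually_nhdsWithin_of_eventually_nhds hderiv] with z hz hdz
    rwa [hdz.deriv, sub_add_cancel, ← uFunOn_erase χ ℓ w1 w0 (mem_univ j)]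
  obtain ⟨hr, hGa, hG'⟩ := laurent_coeffs_sq_add_deriv hh hG.continuousAt hexp'
  have hha : h a = -(k / 2 / a) := by
    simp only [h, uFunOn]
    linear_combination hB0 j
  refine ⟨by rw [hr, hha]; ring, ?_⟩
  rw [hGa, hG'.deriv, hha]
  ring
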